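/- Let I be an open real interval, α ∈ ℝ, and let w : [0,1] × I → ℝ be C³. Then for all t ∈ I: ∫₀¹ w_xtt(x,t)((1−α) w_x(x,t) + x w_xx(x,t)) dx = d/dt ∫₀¹ ((1−α) w_x(x,t) w_xt(x,t) + x w_xt(x,t) w_xx(x,t)) dx + (α−½)∫₀¹ w_xt(x,t)² dx − ½ w_xt(1,t)². -/

import Mathlib

open Real Set

/-- `w_t`: partial derivative of `w` in time. -/
noncomputable def pt (w : ℝ → ℝ → ℝ) (x t : ℝ) : ℝ := deriv (fun s => w x s) t

/-- `w_x`: partial derivative of `w` in space. -/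
noncomputable def px (w : ℝ → ℝ → ℝ) (x t : ℝ) : ℝ := deriv (fun y => w y t) x

/-- `w_tt`. -/
noncomputable def ptt (w : ℝ → ℝ → ℝ) (x t : ℝ) : ℝ := deriv (fun s => pt w x s) t

/-- `w_xt`: spatial derivative of `w_t`. -/
noncomputable def pxt (w : ℝ → ℝ → ℝ) (x t : ℝ) : ℝ := deriv (fun y => pt w y t) x

/-- `w_xx`. -/
noncomputable def pxx (w : ℝ → ℝ → ℝ) (x t : ℝ) : ℝ := deriv (fun y => px w y t) x

/-- `w_xxx`. -/
noncomputable def pxxx (w : ℝ → ℝ → ℝ) (x t : ℝ) : ℝ := deriv (fun y => pxx w y t) x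

/-- `w_xxxx`. -/
noncomputable def pxxxx (w : ℝ → ℝ → ℝ) (x t : ℝ) : ℝ := deriv (fun y => pxxx w y t) x

/-- `w_xtt`: time derivative of `w_xt`. -/
noncomputable def pxtt (w : ℝ → ℝ → ℝ) (x t : ℝ) : ℝ := deriv (fun s => pxt w x s) t

/-- `w_xxtt`: second spatial derivative of `w_tt`. -/
noncomputable def pxxtt (w : ℝ → ℝ → ℝ) (x t : ℝ) : ℝ :=
  deriv (fun y => deriv (fun z => ptt w z t) y) x

/-- The energy E(t) = ½∫₀¹ w_t² + ½∫₀¹ w_xx² + ½∫₀¹ w_xt² dx. -/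
noncomputable def energy (w : ℝ → ℝ → ℝ) (t : ℝ) : ℝ :=
  (1/2) * (∫ x in (0:ℝ)..1, (pt w x t) ^ 2)
    + (1/2) * (∫ x in (0:ℝ)..1, (pxx w x t) ^ 2)
    + (1/2) * (∫ x in (0:ℝ)..1, (pxt w x t) ^ 2)

/-- The auxiliary functional ϱ(t) = ∫₀¹ ( w_t(x w_x − α w) + w_xt[(1−α)w_x + x w_xx] ) dx. -/
noncomputable def rhoFun (w : ℝ → ℝ → ℝ) (α : ℝ) (t : ℝ) : ℝ :=
  ∫ x in (0:ℝ)..1,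
    (pt w x t * (x * px w x t - α * w x t)
      + pxt w x t * ((1 - α) * px w x t + x * pxx w x t))

/-!
Write `u = w_x` and `v = u_t = w_xt`. Differentiating `(1 - α) u v + x v u_x` in time under the
integral gives the integrand `v_t ((1 - α) u + x u_x)` of `𝒩₂` plus `(1 - α) v² + x v v_x`, using
the symmetry `u_xt = v_x` of mixed partials. Since `x v v_x = ½ x (v²)_x`, integrating by parts
turns `∫₀¹ x v v_x` into `½ v(1)² - ½ ∫₀¹ v²`.
-/

open Function MeasureTheory

section PartialDerivatives

variable {f : ℝ → ℝ → ℝ}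

theorem hasDerivAt_fst_slice {x t : ℝ} (hf : DifferentiableAt ℝ (uncurry f) (x, t)) :
    HasDerivAt (fun y => f y t) (fderiv ℝ (uncurry f) (x, t) (1, 0)) x :=
  (hf.hasFDerivAt.comp_hasDerivAt x ((hasDerivAt_id x).prodMk (hasDerivAt_const x t)) :)

theorem hasDerivAt_snd_slice {x t : ℝ} (hf : DifferentiableAt ℝ (uncurry f) (x, t)) :
    HasDerivAt (fun s => f x s) (fderiv ℝ (uncurry f) (x, t) (0, 1)) t :=
  (hf.hasFDerivAt.comp_hasDerivAt t ((hasDerivAt_const t x).prodMk (hasDerivAt_id t)) :)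

theorem hasDerivAt_px {x t : ℝ} (hf : DifferentiableAt ℝ (uncurry f) (x, t)) :
    HasDerivAt (fun y => f y t) (px f x t) x :=
  (hasDerivAt_fst_slice hf).differentiableAt.hasDerivAt

theorem hasDerivAt_pt {x t : ℝ} (hf : DifferentiableAt ℝ (uncurry f) (x, t)) :
    HasDerivAt (fun s => f x s) (pt f x t) t :=
  (hasDerivAt_snd_slice hf).differentiableAt.hasDerivAt

theorem uncurry_px (hf : Differentiable ℝ (uncurry f)) :
    uncurry (px f) = fun p => fderiv ℝ (uncurry f) p (1, 0) :=
  funext fun p => (hasDerivAt_fst_slice (hf p)).deriv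

theorem uncurry_pt (hf : Differentiable ℝ (uncurry f)) :
    uncurry (pt f) = fun p => fderiv ℝ (uncurry f) p (0, 1) :=
  funext fun p => (hasDerivAt_snd_slice (hf p)).deriv

theorem contDiff_uncurry_px {m n : WithTop ℕ∞} (hf : ContDiff ℝ n (uncurry f)) (hmn : m + 1 ≤ n) :
    ContDiff ℝ m (uncurry (px f)) := by
  rw [uncurry_px (hf.differentiable (by rintro rfl; simp at hmn))]
  exact (hf.fderiv_right hmn).clm_apply contDiff_const

theorem contDiff_uncurry_pt {m n : WithTop ℕ∞} (hf : ContDiff ℝ n (uncurry f)) (hmn : m + 1 ≤ n) :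
    ContDiff ℝ m (uncurry (pt f)) := by
  rw [uncurry_pt (hf.differentiable (by rintro rfl; simp at hmn))]
  exact (hf.fderiv_right hmn).clm_apply contDiff_const

theorem fderiv_fderiv_apply {g : ℝ × ℝ → ℝ} {p : ℝ × ℝ}
    (hg : DifferentiableAt ℝ (fderiv ℝ g) p) (v w : ℝ × ℝ) :
    fderiv ℝ (fun q => fderiv ℝ g q v) p w = fderiv ℝ (fderiv ℝ g) p w v := by
  rw [fderiv_clm_apply hg (differentiableAt_const v)]
  simp

theorem pt_px (hf : ContDiff ℝ 2 (uncurry f)) : pt (px f) = px (pt f) := by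
  funext x t
  have hd : Differentiable ℝ (uncurry f) := hf.differentiable (by norm_num)
  have hdd : DifferentiableAt ℝ (fderiv ℝ (uncurry f)) (x, t) :=
    (hf.fderiv_right (m := 1) le_rfl).differentiable (by norm_num) _
  have hxd : Differentiable ℝ (uncurry (px f)) :=
    (contDiff_uncurry_px (m := 1) hf (by norm_num)).differentiable one_ne_zero
  have htd : Differentiable ℝ (uncurry (pt f)) :=
    (contDiff_uncurry_pt (m := 1) hf (by norm_num)).differentiable one_ne_zero
  calc pt (px f) x t = fderiv ℝ (uncurry (px f)) (x, t) (0, 1) :=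
        (hasDerivAt_snd_slice (hxd _)).deriv
    _ = fderiv ℝ (fderiv ℝ (uncurry f)) (x, t) (0, 1) (1, 0) := by
        rw [uncurry_px hd, fderiv_fderiv_apply hdd]
    _ = fderiv ℝ (fderiv ℝ (uncurry f)) (x, t) (1, 0) (0, 1) :=
        (hf.contDiffAt.isSymmSndFDerivAt (by simp)).eq _ _
    _ = fderiv ℝ (uncurry (pt f)) (x, t) (1, 0) := by
        rw [uncurry_pt hd, fderiv_fderiv_apply hdd]
    _ = px (pt f) x t :=
        (hasDerivAt_fst_slice (htd _)).deriv.symm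

end PartialDerivatives

theorem hasDerivAt_intervalIntegral_of_contDiff {F : ℝ → ℝ → ℝ}
    (hF : ContDiff ℝ 1 (uncurry F)) (a b t : ℝ) :
    HasDerivAt (fun s => ∫ x in a..b, F x s) (∫ x in a..b, pt F x t) t := by
  have hFt : Continuous (uncurry (pt F)) := (contDiff_uncurry_pt (m := 0) hF le_rfl).continuous
  obtain ⟨C, hC⟩ := (isCompact_uIcc.prod (isCompact_closedBall t 1)).exists_bound_of_continuousOn
    hFt.continuousOn
  have hbound : ∀ᵐ x, x ∈ uIoc a b → ∀ s ∈ Metric.ball t 1, ‖pt F x s‖ ≤ C :=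
    ae_of_all _ fun x hx s hs =>
      hC (x, s) ⟨uIoc_subset_uIcc hx, Metric.ball_subset_closedBall hs⟩
  have hderiv : ∀ᵐ x, x ∈ uIoc a b → ∀ s ∈ Metric.ball t 1,
      HasDerivAt (fun s => F x s) (pt F x s) s :=
    ae_of_all _ fun x _ s _ => hasDerivAt_pt (hF.differentiable one_ne_zero (x, s))
  exact (intervalIntegral.hasDerivAt_integral_of_dominated_loc_of_deriv_le
    (Metric.ball_mem_nhds t one_pos)
    (.of_forall fun s => (hF.continuous.uncurry_right s).aestronglyMeasurable)
    ((hF.continuous.uncurry_right t).intervalIntegrable a b)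
    (hFt.uncurry_right t).aestronglyMeasurable hbound intervalIntegrable_const hderiv).2

theorem integral_id_mul_mul_deriv {a b : ℝ} {v v' : ℝ → ℝ}
    (hv : ∀ x ∈ uIcc a b, HasDerivAt v (v' x) x) (hv' : IntervalIntegrable v' volume a b) :
    ∫ x in a..b, x * (v x * v' x) = (b * v b ^ 2 - a * v a ^ 2 - ∫ x in a..b, v x ^ 2) / 2 := by
  have hsq : ∀ x ∈ uIcc a b, HasDerivAt (fun y => v y ^ 2 / 2) (v x * v' x) x := fun x hx =>
    (((hv x hx).fun_pow 2).div_const 2).congr_deriv (by ring)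
  have hibp := intervalIntegral.integral_mul_deriv_eq_deriv_mul (fun x _ => hasDerivAt_id x) hsq
    intervalIntegrable_const
    (hv'.continuousOn_mul fun x hx => (hv x hx).continuousAt.continuousWithinAt)
  simp only [id, one_mul, intervalIntegral.integral_div] at hibp
  rw [hibp]
  ring

section Multiplier

variable (α : ℝ) {u : ℝ → ℝ → ℝ}

theorem hasDerivAt_multiplier_integrand (hu : ContDiff ℝ 2 (uncurry u)) (x t : ℝ) :
    HasDerivAt (fun s => (1 - α) * u x s * pt u x s + x * pt u x s * px u x s)
      ((1 - α) * pt u x t ^ 2 + x * (pt u x t * px (pt u) x t)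
        + pt (pt u) x t * ((1 - α) * u x t + x * px u x t)) t := by
  have hut := hasDerivAt_pt (hu.differentiable (by norm_num) (x, t))
  have hutt := hasDerivAt_pt ((contDiff_uncurry_pt hu le_rfl).differentiable one_ne_zero (x, t))
  have huxt := hasDerivAt_pt ((contDiff_uncurry_px hu le_rfl).differentiable one_ne_zero (x, t))
  rw [pt_px hu] at huxt
  exact (((hut.const_mul (1 - α)).mul hutt).add ((hutt.const_mul x).mul huxt)).congr_deriv
    (by ring)

theorem integral_pt_pt_mul_eq_deriv (hu : ContDiff ℝ 2 (uncurry u)) (a b t : ℝ) :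
    ∫ x in a..b, pt (pt u) x t * ((1 - α) * u x t + x * px u x t)
      = deriv (fun s => ∫ x in a..b, ((1 - α) * u x s * pt u x s + x * pt u x s * px u x s)) t
        + (α - 1/2) * (∫ x in a..b, pt u x t ^ 2)
        - (1/2) * (b * pt u b t ^ 2 - a * pt u a t ^ 2) := by
  have hv : ContDiff ℝ 1 (uncurry (pt u)) := contDiff_uncurry_pt hu le_rfl
  have hux : ContDiff ℝ 1 (uncurry (px u)) := contDiff_uncurry_px hu le_rfl
  have cont_u := hu.continuous.uncurry_right t
  have cont_v := hv.continuous.uncurry_right t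
  have cont_ux := hux.continuous.uncurry_right t
  have cont_vx := (contDiff_uncurry_px (m := 0) hv le_rfl).continuous.uncurry_right t
  have cont_vt := (contDiff_uncurry_pt (m := 0) hv le_rfl).continuous.uncurry_right t
  let F x s := (1 - α) * u x s * pt u x s + x * pt u x s * px u x s
  have hF : ContDiff ℝ 1 (uncurry F) := by
    change ContDiff ℝ 1 fun p : ℝ × ℝ =>
      (1 - α) * uncurry u p * uncurry (pt u) p + p.1 * uncurry (pt u) p * uncurry (px u) p
    have := hu.of_le one_le_two
    fun_prop
  have hD : deriv (fun s => ∫ x in a..b, F x s) t = ∫ x in a..b, pt F x t :=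
    (hasDerivAt_intervalIntegral_of_contDiff hF a b t).deriv
  have hibp : ∫ x in a..b, x * (pt u x t * px (pt u) x t)
      = (b * pt u b t ^ 2 - a * pt u a t ^ 2 - ∫ x in a..b, pt u x t ^ 2) / 2 :=
    integral_id_mul_mul_deriv (fun x _ => hasDerivAt_px (hv.differentiable one_ne_zero (x, t)))
      (cont_vx.intervalIntegrable a b)
  have hsplit : ∫ x in a..b, pt F x t
      = (1 - α) * (∫ x in a..b, pt u x t ^ 2) + (∫ x in a..b, x * (pt u x t * px (pt u) x t))
        + ∫ x in a..b, pt (pt u) x t * ((1 - α) * u x t + x * px u x t) := by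
    rw [← intervalIntegral.integral_const_mul, ← intervalIntegral.integral_add,
      ← intervalIntegral.integral_add]
    · exact intervalIntegral.integral_congr fun x _ =>
        (hasDerivAt_multiplier_integrand α hu x t).deriv
    all_goals exact Continuous.intervalIntegrable (by fun_prop) _ _
  rw [hD, hsplit, hibp]
  ring

end Multiplier

/-- Integration-by-parts identity for 𝒩₂ = ∫₀¹ w_xtt ((1−α) w_x + x w_xx) dx:
𝒩₂ = d/dt ∫₀¹ ((1−α) w_x w_xt + x w_xt w_xx) dx + (α−½)∫₀¹ w_xt² dx − ½ w_xt(1,t)². -/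
theorem stmt_8 (a b α : ℝ) (w : ℝ → ℝ → ℝ)
    (hw : ContDiff ℝ 3 (Function.uncurry w)) :
    ∀ t ∈ Set.Ioo a b,
      (∫ x in (0:ℝ)..1, pxtt w x t * ((1 - α) * px w x t + x * pxx w x t))
        = deriv (fun s => ∫ x in (0:ℝ)..1,
              ((1 - α) * px w x s * pxt w x s + x * pxt w x s * pxx w x s)) t
          + (α - 1/2) * (∫ x in (0:ℝ)..1, (pxt w x t) ^ 2)
          - (1/2) * (pxt w 1 t) ^ 2 := by
  intro t _
  have key := integral_pt_pt_mul_eq_deriv α (contDiff_uncurry_px (m := 2) hw (by norm_num)) 0 1 t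
  rw [pt_px (hw.of_le (by norm_num)), one_mul, zero_mul, sub_zero] at key
  exact key
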